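/- Let ρ : sl_{n+1}(K) → End_K(K[x_1,…,x_n]) be a Lie algebra homomorphism such that ρ(e_{i,n+1}) is multiplication by x_i for every 1 ≤ i ≤ n, and set p_{ij} := ρ(e_{ij})(1) for i ≠ j and p_{ii} := ρ(h_i)(1). Then the following identities of polynomials hold: (a) x_i·p_{jj}^i = x_j·p_{ii}^j for all 1 ≤ i, j ≤ n; (b) x_k·p_{ij}^k − x_i·p_{kk}^j = (δ_{ki} − δ_{kj})·p_{ij} for all 1 ≤ i, j, k ≤ n; (c) x_i·p_{kl}^j − x_k·p_{ij}^l = δ_{kj}·p_{il} − δ_{il}·p_{kj} for all 1 ≤ i, j, k, l ≤ n with i ≠ j and k ≠ l. -/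

import Mathlib

open LieAlgebra.SpecialLinear Matrix

attribute [local instance] LieRing.ofAssociativeRing LieAlgebra.ofAssociativeAlgebra

/-- The matrix unit `e_{ab}` (for `a ≠ b`) as an element of `sl_N(K)`. -/
noncomputable def eE {K : Type*} [Field K] {N : ℕ} (a b : Fin N) (hab : a ≠ b) :
    sl (Fin N) K := single a b hab (1 : K)

/-- The element `h_i = e_{ii} - (1/(n+1))·I` of `sl_{n+1}(K)` (indices `1 ≤ i ≤ n`). -/
noncomputable def hE {K : Type*} [Field K] [CharZero K] {n : ℕ} (i : Fin n) :
    sl (Fin (n + 1)) K :=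
  ⟨Matrix.single i.castSucc i.castSucc (1 : K) - ((n + 1 : K))⁻¹ • 1, by
    show _ ∈ LinearMap.ker (Matrix.traceLinearMap (Fin (n + 1)) K K)
    rw [LinearMap.mem_ker, map_sub]
    have h1 : (Matrix.traceLinearMap (Fin (n + 1)) K K)
        (Matrix.single i.castSucc i.castSucc (1 : K)) = 1 := by
      rw [Matrix.traceLinearMap_apply, Matrix.trace_single_eq_same]
    have h2 : (Matrix.traceLinearMap (Fin (n + 1)) K K)
        (((n + 1 : K))⁻¹ • (1 : Matrix (Fin (n + 1)) (Fin (n + 1)) K)) = 1 := by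
      rw [_root_.map_smul]
      simp only [Matrix.traceLinearMap_apply, Matrix.trace_one, Fintype.card_fin,
        smul_eq_mul]
      push_cast
      exact inv_mul_cancel₀ (Nat.cast_add_one_ne_zero n)
    rw [h1, h2, sub_self]⟩

/-- The element `e_{i,n+1}` of `sl_{n+1}(K)` (denoted `x_i`), for `1 ≤ i ≤ n`. -/
noncomputable def xg {K : Type*} [Field K] {n : ℕ} (i : Fin n) : sl (Fin (n + 1)) K :=
  eE i.castSucc (Fin.last n) (Fin.castSucc_lt_last i).ne

/-- The element `e_{ij}` of `sl_{n+1}(K)` for `1 ≤ i ≠ j ≤ n`. -/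
noncomputable def eg {K : Type*} [Field K] {n : ℕ} (i j : Fin n) (hij : i ≠ j) :
    sl (Fin (n + 1)) K :=
  eE i.castSucc j.castSucc (by simpa [Fin.ext_iff] using hij)

/-- The element `e_{n+1,i}` of `sl_{n+1}(K)` for `1 ≤ i ≤ n`. -/
noncomputable def fg {K : Type*} [Field K] {n : ℕ} (i : Fin n) : sl (Fin (n + 1)) K :=
  eE (Fin.last n) i.castSucc (Fin.castSucc_lt_last i).ne'

/-- The element `h̄ = h_1 + ⋯ + h_n` of `sl_{n+1}(K)`. -/
noncomputable def hbar (K : Type*) [Field K] [CharZero K] (n : ℕ) :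
    sl (Fin (n + 1)) K := ∑ i : Fin n, hE i


section Aux

open MvPolynomial

lemma keyD {K : Type*} [CommRing K] {n : ℕ}
    (D : Module.End K (MvPolynomial (Fin n) K)) (a b : Fin n)
    (h : ∀ (j : Fin n) (f : MvPolynomial (Fin n) K),
      D (X j * f) = X j * D f + (if j = b then X a * f else 0)) :
    ∀ f, D f = D 1 * f + X a * pderiv b f := by
  intro f
  induction f using MvPolynomial.induction_on with
  | C c =>
    have h1 : (C c : MvPolynomial (Fin n) K) = c • 1 := by
      rw [smul_eq_C_mul, mul_one]
    rw [h1, _root_.map_smul, Derivation.map_smul, pderiv_one, smul_zero, mul_zero, add_zero,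
      smul_eq_C_mul, smul_eq_C_mul]
    ring
  | add p q hp hq =>
    rw [map_add, hp, hq, map_add]
    ring
  | mul_X p j hp =>
    rw [mul_comm p (X j), h j p, hp, Derivation.leibniz, pderiv_X,
      smul_eq_mul, smul_eq_mul]
    by_cases hjb : j = b
    · subst hjb
      simp only [if_pos rfl, if_true, Pi.single_eq_same]
      ring
    · simp only [if_neg hjb, Pi.single_eq_of_ne hjb]
      ring

lemma eE_val {K : Type*} [Field K] {N : ℕ} (a b : Fin N) (hab : a ≠ b) :
    (eE a b hab : sl (Fin N) K).val = Matrix.single a b 1 := rfl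

lemma comm_std {K : Type*} [Field K] {N : ℕ} (a b c d : Fin N) :
    Matrix.single a b (1 : K) * Matrix.single c d 1
      - Matrix.single c d 1 * Matrix.single a b 1
    = (if b = c then Matrix.single a d 1 else 0)
      - (if d = a then Matrix.single c b 1 else 0) := by
  by_cases h1 : b = c <;> by_cases h2 : d = a <;>
    simp [h1, h2, Matrix.single_mul_single_same, Matrix.single_mul_single_of_ne, Ne.symm]

lemma comm_sub_smul_left {K : Type*} [Field K] {N : ℕ}
    (M P : Matrix (Fin N) (Fin N) K) (c : K) :
    (M - c • 1) * P - P * (M - c • 1) = M * P - P * M := by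
  simp only [sub_mul, mul_sub, Matrix.smul_mul, Matrix.mul_smul, one_mul, mul_one]
  abel

lemma comm_sub_smul_right {K : Type*} [Field K] {N : ℕ}
    (M P : Matrix (Fin N) (Fin N) K) (c : K) :
    M * (P - c • 1) - (P - c • 1) * M = M * P - P * M := by
  simp only [sub_mul, mul_sub, Matrix.smul_mul, Matrix.mul_smul, one_mul, mul_one]
  abel

variable {K : Type*} [Field K] [CharZero K] {n : ℕ}

lemma hE_val (i : Fin n) : (hE i : sl (Fin (n + 1)) K).val
    = Matrix.single i.castSucc i.castSucc (1 : K) - ((n + 1 : K))⁻¹ • 1 := rfl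

lemma eg_val (i j : Fin n) (hij : i ≠ j) : (eg i j hij : sl (Fin (n+1)) K).val
    = Matrix.single i.castSucc j.castSucc (1:K) := rfl

lemma castSucc_ne_last (i : Fin n) : (i.castSucc : Fin (n+1)) ≠ Fin.last n :=
  (Fin.castSucc_lt_last i).ne

lemma B1 (k j : Fin n) :
    ⁅(hE k : sl (Fin (n + 1)) K), xg j⁆
      = if j = k then (xg j : sl (Fin (n + 1)) K) else 0 := by
  apply Subtype.ext
  rw [sl_bracket]
  rw [hE_val, comm_sub_smul_left]
  rw [show (xg j : sl (Fin (n+1)) K).val = Matrix.single j.castSucc (Fin.last n) (1:K) from rfl,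
    comm_std]
  have h1 : (Fin.last n) ≠ k.castSucc := (Fin.castSucc_lt_last k).ne'
  by_cases h : j = k
  · subst h
    simp [h1, eE_val, xg]
  · have : (k.castSucc : Fin (n+1)) ≠ j.castSucc := by simpa [Fin.ext_iff] using Ne.symm h
    simp [h1, this, h, eE_val, xg]

lemma B2 (i j m : Fin n) (hij : i ≠ j) :
    ⁅(eg i j hij : sl (Fin (n + 1)) K), xg m⁆
      = if m = j then (xg i : sl (Fin (n + 1)) K) else 0 := by
  apply Subtype.ext
  rw [sl_bracket]
  rw [eg_val,
    show (xg m : sl (Fin (n+1)) K).val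
      = Matrix.single m.castSucc (Fin.last n) (1:K) from rfl, comm_std]
  by_cases h : m = j
  · subst h
    simp [castSucc_ne_last, (castSucc_ne_last i).symm, eE_val, xg]
  · have : (j.castSucc : Fin (n+1)) ≠ m.castSucc := by simpa [Fin.ext_iff] using Ne.symm h
    simp [this, (castSucc_ne_last i).symm, h, eE_val, xg]

lemma B3 (i j : Fin n) :
    ⁅(hE i : sl (Fin (n + 1)) K), (hE j : sl (Fin (n + 1)) K)⁆ = 0 := by
  apply Subtype.ext
  rw [sl_bracket, hE_val, hE_val, comm_sub_smul_left, comm_sub_smul_right, comm_std]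
  by_cases h : i = j <;> simp [h, Fin.castSucc_inj, Ne.symm]

lemma B4 (k i j : Fin n) (hij : i ≠ j) :
    ⁅(hE k : sl (Fin (n + 1)) K), eg i j hij⁆
      = ((if k = i then (1:K) else 0) - (if k = j then 1 else 0))
          • (eg i j hij : sl (Fin (n + 1)) K) := by
  apply Subtype.ext
  rw [sl_bracket, hE_val, comm_sub_smul_left, eg_val, comm_std]
  rw [show ((((if k = i then (1:K) else 0) - (if k = j then 1 else 0)) • eg i j hij :
      sl (Fin (n+1)) K)).val
      = ((if k = i then (1:K) else 0) - (if k = j then 1 else 0)) •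
        Matrix.single i.castSucc j.castSucc (1:K) from rfl]
  by_cases h1 : k = i <;> by_cases h2 : k = j <;>
    simp_all [Fin.castSucc_inj, eq_comm, sub_smul, Matrix.smul_single]

lemma B5a (i j : Fin n) (hij : i ≠ j) :
    ⁅(eg i j hij : sl (Fin (n + 1)) K), eg j i hij.symm⁆
      = (hE i : sl (Fin (n + 1)) K) - hE j := by
  apply Subtype.ext
  rw [sl_bracket, eg_val, eg_val, comm_std]
  have h : ((hE i - hE j : sl (Fin (n+1)) K)).val = (hE i : sl (Fin (n+1)) K).val
      - (hE j : sl (Fin (n+1)) K).val := rfl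
  rw [h, hE_val, hE_val]
  simp

lemma B5b (i j l : Fin n) (hij : i ≠ j) (hjl : j ≠ l) (hil : i ≠ l) :
    ⁅(eg i j hij : sl (Fin (n + 1)) K), eg j l hjl⁆ = (eg i l hil : sl (Fin (n + 1)) K) := by
  apply Subtype.ext
  rw [sl_bracket, eg_val, eg_val, comm_std, eg_val]
  have h2 : (l.castSucc : Fin (n+1)) ≠ i.castSucc := by
    simpa [Fin.ext_iff] using Ne.symm hil
  simp [h2]

lemma B5c (i j k : Fin n) (hij : i ≠ j) (hjk : j ≠ k) (hki : k ≠ i) :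
    ⁅(eg i j hij : sl (Fin (n + 1)) K), eg k i hki⁆
      = - (eg k j hjk.symm : sl (Fin (n + 1)) K) := by
  apply Subtype.ext
  rw [sl_bracket, eg_val, eg_val, comm_std]
  have h1 : (j.castSucc : Fin (n+1)) ≠ k.castSucc := by
    simpa [Fin.ext_iff] using hjk
  have h : ((- eg k j hjk.symm : sl (Fin (n+1)) K)).val
      = - (eg k j hjk.symm : sl (Fin (n+1)) K).val := rfl
  rw [h, eg_val]
  simp [h1]

lemma B5d (i j k l : Fin n) (hij : i ≠ j) (hkl : k ≠ l) (hjk : j ≠ k) (hli : l ≠ i) :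
    ⁅(eg i j hij : sl (Fin (n + 1)) K), eg k l hkl⁆ = (0 : sl (Fin (n + 1)) K) := by
  apply Subtype.ext
  rw [sl_bracket, eg_val, eg_val, comm_std]
  have h1 : (j.castSucc : Fin (n+1)) ≠ k.castSucc := by
    simpa [Fin.ext_iff] using hjk
  have h2 : (l.castSucc : Fin (n+1)) ≠ i.castSucc := by
    simpa [Fin.ext_iff] using hli
  simp [h1, h2]

end Aux


open MvPolynomial in
/-- With `p_{ij} := ρ(e_{ij})(1)` for `i ≠ j` and `p_{ii} := ρ(h_i)(1)`,
the polynomial identities (a) `x_i p_{jj}^i = x_j p_{ii}^j`,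
(b) `x_k p_{ij}^k - x_i p_{kk}^j = (δ_{ki} - δ_{kj}) p_{ij}` and
(c) `x_i p_{kl}^j - x_k p_{ij}^l = δ_{kj} p_{il} - δ_{il} p_{kj}` (for `i ≠ j`, `k ≠ l`)
hold. -/
theorem stmt13 (K : Type*) [Field K] [IsAlgClosed K] [CharZero K]
    (n : ℕ) (hn : 1 ≤ n)
    (ρ : sl (Fin (n + 1)) K →ₗ⁅K⁆ Module.End K (MvPolynomial (Fin n) K))
    (hx : ∀ (i : Fin n) (f : MvPolynomial (Fin n) K), ρ (xg i) f = X i * f)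
    (P : Fin n → Fin n → MvPolynomial (Fin n) K)
    (hP : ∀ i j : Fin n,
      P i j = if h : i = j then ρ (hE i) 1 else ρ (eg i j h) 1) :
    (∀ i j : Fin n, X i * pderiv i (P j j) = X j * pderiv j (P i i)) ∧
    (∀ i j k : Fin n,
      X k * pderiv k (P i j) - X i * pderiv j (P k k)
        = ((if k = i then (1 : MvPolynomial (Fin n) K) else 0)
            - (if k = j then (1 : MvPolynomial (Fin n) K) else 0)) * P i j) ∧
    (∀ i j k l : Fin n, i ≠ j → k ≠ l →
      X i * pderiv j (P k l) - X k * pderiv l (P i j)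
        = (if k = j then P i l else 0) - (if i = l then P k j else 0)) := by
  classical
  -- applying the Lie homomorphism to brackets
  have bra : ∀ g1 g2 : sl (Fin (n + 1)) K,
      ρ ⁅g1, g2⁆ 1 = ρ g1 (ρ g2 1) - ρ g2 (ρ g1 1) := by
    intro g1 g2
    rw [LieHom.map_lie]
    rfl
  have hcomm : ∀ (g : sl (Fin (n + 1)) K) (j : Fin n) (f : MvPolynomial (Fin n) K),
      ρ g (X j * f) = X j * ρ g f + ρ ⁅g, xg j⁆ f := by
    intro g j f
    have h1 : ρ ⁅g, xg j⁆ f = ρ g (ρ (xg j) f) - ρ (xg j) (ρ g f) := by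
      rw [LieHom.map_lie]
      rfl
    rw [← hx j f, ← hx j (ρ g f), h1]
    ring
  have hP1h : ∀ k : Fin n, ρ (hE k) 1 = P k k := by
    intro k
    rw [hP k k, dif_pos rfl]
  have hP1e : ∀ (i j : Fin n) (hij : i ≠ j), ρ (eg i j hij) 1 = P i j := by
    intro i j hij
    rw [hP i j, dif_neg hij]
  -- the operators are first-order differential operators
  have hDh : ∀ (k : Fin n) (f : MvPolynomial (Fin n) K),
      ρ (hE k) f = P k k * f + X k * pderiv k f := by
    intro k f
    rw [← hP1h k]
    refine keyD (ρ (hE k)) k k ?_ f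
    intro j f
    rw [hcomm, B1]
    by_cases h : j = k
    · subst h
      rw [if_pos rfl, if_pos rfl, hx]
    · rw [if_neg h, if_neg h, map_zero, LinearMap.zero_apply]
  have hDe : ∀ (i j : Fin n) (hij : i ≠ j) (f : MvPolynomial (Fin n) K),
      ρ (eg i j hij) f = P i j * f + X i * pderiv j f := by
    intro i j hij f
    rw [← hP1e i j hij]
    refine keyD (ρ (eg i j hij)) i j ?_ f
    intro m f
    rw [hcomm, B2 i j m hij]
    by_cases h : m = j
    · rw [if_pos h, if_pos h, hx]
    · rw [if_neg h, if_neg h, map_zero, LinearMap.zero_apply]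
  -- part (a)
  have parta : ∀ i j : Fin n, X i * pderiv i (P j j) = X j * pderiv j (P i i) := by
    intro i j
    have h0 : ρ (hE i) (ρ (hE j) 1) - ρ (hE j) (ρ (hE i) 1) = 0 := by
      rw [← bra, B3, map_zero, LinearMap.zero_apply]
    rw [hP1h, hP1h, hDh, hDh] at h0
    linear_combination h0
  refine ⟨parta, ?_, ?_⟩
  -- part (b)
  · intro i j k
    by_cases hij : i = j
    · subst hij
      rw [sub_self, zero_mul, sub_eq_zero]
      exact parta k i
    · have h0 := bra (hE k) (eg i j hij)
      rw [B4 k i j hij, _root_.map_smul, LinearMap.smul_apply, hP1e i j hij, hP1h k,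
        hDh k (P i j), hDe i j hij (P k k), smul_eq_C_mul] at h0
      have hC : ((if k = i then (1 : MvPolynomial (Fin n) K) else 0)
          - (if k = j then (1 : MvPolynomial (Fin n) K) else 0))
          = C ((if k = i then (1 : K) else 0) - (if k = j then 1 else 0)) := by
        by_cases h1 : k = i <;> by_cases h2 : k = j <;> simp [h1, h2]
      rw [hC]
      linear_combination -h0
  -- part (c)
  · intro i j k l hij hkl
    by_cases h1 : k = j <;> by_cases h2 : i = l
    · cases h1
      cases h2
      rw [if_pos rfl, if_pos rfl]
      have h0 := bra (eg i j hij) (eg j i hij.symm)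
      rw [B5a i j hij, map_sub, LinearMap.sub_apply, hP1h i, hP1h j,
        hP1e j i hij.symm, hP1e i j hij,
        hDe i j hij (P j i), hDe j i hij.symm (P i j)] at h0
      linear_combination -h0
    · cases h1
      rw [if_pos rfl, if_neg h2, sub_zero]
      have h0 := bra (eg i j hij) (eg j l hkl)
      rw [B5b i j l hij hkl h2, hP1e i l h2, hP1e j l hkl, hP1e i j hij,
        hDe i j hij (P j l), hDe j l hkl (P i j)] at h0
      linear_combination -h0
    · cases h2
      have hjk : j ≠ k := fun h => h1 h.symm
      rw [if_neg h1, if_pos rfl, zero_sub]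
      have h0 := bra (eg i j hij) (eg k i hkl)
      rw [B5c i j k hij hjk hkl, map_neg, LinearMap.neg_apply,
        hP1e k j hjk.symm, hP1e k i hkl, hP1e i j hij,
        hDe i j hij (P k i), hDe k i hkl (P i j)] at h0
      linear_combination -h0
    · have hjk : j ≠ k := fun h => h1 h.symm
      have hli : l ≠ i := fun h => h2 h.symm
      rw [if_neg h1, if_neg h2, sub_zero]
      have h0 := bra (eg i j hij) (eg k l hkl)
      rw [B5d i j k l hij hkl hjk hli, map_zero, LinearMap.zero_apply,
        hP1e k l hkl, hP1e i j hij,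
        hDe i j hij (P k l), hDe k l hkl (P i j)] at h0
      linear_combination -h0
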